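/- Let M \ge 0 on H_1 \oplus H_2 with Schur complement S supported on H_1. Then for every f \in H_1, \langle S f, f \rangle = \inf \{ \langle M(f \oplus g), f \oplus g \rangle : g \in H_2 \}, and this infimum characterization determines S uniquely among positive operators on H_1. -/

import Mathlib

/-!
Factor the block operator on the `L²` product as `M = R* R`, so that
`⟨M (f ⊕ g), f ⊕ g⟩ = ‖T f + U g‖²` with `T = R ∘ inl`, `U = R ∘ inr`. The infimum over `g` is then
the squared distance from `T f` to the range of `U`, namely `‖P T f‖²` for the orthogonal projection
`P` onto `(ran U)ᗮ`; it is therefore the quadratic form of the positive operator `(P T)* (P T)`.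
That operator is admissible in the maximality of `S`, which squeezes `⟨S f, f⟩` onto the infimum,
and on a complex Hilbert space an operator is determined by its quadratic form.
-/

open scoped ComplexOrder
open ContinuousLinearMap
open scoped InnerProductSpace

section
variable {𝕜 E F : Type*} [RCLike 𝕜] [NormedAddCommGroup E] [InnerProductSpace 𝕜 E]
  [CompleteSpace E] [NormedAddCommGroup F] [InnerProductSpace 𝕜 F]

theorem isGLB_norm_add_sq (U : F →L[𝕜] E) (w : E) :
    IsGLB {r : ℝ | ∃ g, r = ‖w + U g‖ ^ 2}
      (‖(LinearMap.range (U : F →ₗ[𝕜] E))ᗮ.starProjection w‖ ^ 2) := by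
  set V := LinearMap.range (U : F →ₗ[𝕜] E)
  set P := Vᗮ.starProjection
  have hPU : ∀ g, P (U g) = 0 := fun g =>
    (Submodule.starProjection_apply_eq_zero_iff _).mpr
      (Submodule.le_orthogonal_orthogonal _ (LinearMap.mem_range_self _ g))
  refine ⟨?_, fun b hb => ?_⟩
  · rintro r ⟨g, rfl⟩
    gcongr
    simpa [P, hPU] using Vᗮ.norm_starProjection_apply_le (w + U g)
  · have hclosed : IsClosed {x : E | b ≤ ‖w - x‖ ^ 2} :=
      isClosed_le continuous_const (by fun_prop)
    have hrange : (V : Set E) ⊆ {x : E | b ≤ ‖w - x‖ ^ 2} := by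
      rintro _ ⟨g, rfl⟩
      simpa [sub_eq_add_neg, ← map_neg] using hb ⟨-g, rfl⟩
    have hmem : w - P w ∈ V.topologicalClosure := by
      rw [← Submodule.orthogonal_orthogonal_eq_closure]
      exact Submodule.sub_starProjection_mem_orthogonal w
    simpa using closure_minimal hrange hclosed hmem

theorem exists_inner_self_eq_isGLB_norm_add_sq {H : Type*} [NormedAddCommGroup H]
    [InnerProductSpace 𝕜 H] [CompleteSpace H] (T : H →L[𝕜] E) (U : F →L[𝕜] E) :
    ∃ S₀ : H →L[𝕜] H, ∀ f, ∃ c : ℝ,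
      ⟪S₀ f, f⟫_𝕜 = c ∧ IsGLB {r : ℝ | ∃ g, r = ‖T f + U g‖ ^ 2} c := by
  set X := (LinearMap.range (U : F →ₗ[𝕜] E))ᗮ.starProjection ∘L T
  refine ⟨adjoint X ∘L X, fun f => ⟨‖X f‖ ^ 2, ?_, isGLB_norm_add_sq U (T f)⟩⟩
  rw [comp_apply, adjoint_inner_left, inner_self_eq_norm_sq_to_K]
  norm_cast
end

theorem exists_inner_self_eq_norm_sq {E : Type*} [NormedAddCommGroup E] [InnerProductSpace ℂ E]
    [CompleteSpace E] {N : E →L[ℂ] E} (hN : 0 ≤ N) :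
    ∃ R : E →L[ℂ] E, ∀ x, ⟪N x, x⟫_ℂ = ((‖R x‖ ^ 2 : ℝ) : ℂ) := by
  obtain ⟨R, rfl⟩ := CStarAlgebra.nonneg_iff_eq_star_mul_self.mp hN
  refine ⟨R, fun x => ?_⟩
  rw [star_eq_adjoint, mul_apply_eq_comp, adjoint_inner_left, inner_self_eq_norm_sq_to_K]
  norm_cast

section
variable {H₁ H₂ : Type*} [NormedAddCommGroup H₁] [InnerProductSpace ℂ H₁] [CompleteSpace H₁]
  [NormedAddCommGroup H₂] [InnerProductSpace ℂ H₂] [CompleteSpace H₂]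
  (A : H₁ →L[ℂ] H₁) (B : H₁ →L[ℂ] H₂) (C : H₂ →L[ℂ] H₂)

/-- `⟨M (f ⊕ g), f ⊕ g⟩` for the block operator `M = [[A, B*], [B, C]]`. -/
noncomputable def blockForm (f : H₁) (g : H₂) : ℂ :=
  ⟪A f, f⟫_ℂ + ⟪adjoint B g, f⟫_ℂ + ⟪B f, g⟫_ℂ + ⟪C g, g⟫_ℂ

noncomputable def blockOp : WithLp 2 (H₁ × H₂) →L[ℂ] WithLp 2 (H₁ × H₂) :=
  (WithLp.prodContinuousLinearEquiv 2 ℂ H₁ H₂).symm.toContinuousLinearMap ∘L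
    ((A.coprod (adjoint B)).prod (B.coprod C)) ∘L
    (WithLp.prodContinuousLinearEquiv 2 ℂ H₁ H₂).toContinuousLinearMap

theorem inner_blockOp_self (x : WithLp 2 (H₁ × H₂)) :
    ⟪blockOp A B C x, x⟫_ℂ = blockForm A B C x.fst x.snd := by
  simp only [blockOp, comp_apply, ContinuousLinearEquiv.coe_coe,
    WithLp.prodContinuousLinearEquiv_apply, ContinuousLinearMap.prod_apply, coprod_apply,
    WithLp.ofLp_fst, WithLp.ofLp_snd, WithLp.prodContinuousLinearEquiv_symm_apply,
    WithLp.prod_inner_apply, inner_add_left, blockForm]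
  ring

theorem blockOp_nonneg (hM : ∀ f g, 0 ≤ blockForm A B C f g) : 0 ≤ blockOp A B C := by
  rw [nonneg_iff_isPositive, isPositive_iff_complex]
  intro x
  rw [inner_blockOp_self]
  obtain ⟨hre, him⟩ := Complex.nonneg_iff.mp (hM x.fst x.snd)
  exact ⟨Complex.ext (by simp) (by simp [him]), hre⟩

theorem exists_blockForm_eq_norm_add_sq (hM : ∀ f g, 0 ≤ blockForm A B C f g) :
    ∃ (T : H₁ →L[ℂ] WithLp 2 (H₁ × H₂)) (U : H₂ →L[ℂ] WithLp 2 (H₁ × H₂)),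
      ∀ f g, blockForm A B C f g = ((‖T f + U g‖ ^ 2 : ℝ) : ℂ) := by
  obtain ⟨R, hR⟩ := exists_inner_self_eq_norm_sq (blockOp_nonneg A B C hM)
  set ι := (WithLp.prodContinuousLinearEquiv 2 ℂ H₁ H₂).symm.toContinuousLinearMap
  refine ⟨R ∘L ι ∘L inl ℂ H₁ H₂, R ∘L ι ∘L inr ℂ H₁ H₂, fun f g => ?_⟩
  have := inner_blockOp_self A B C (WithLp.toLp 2 (f, g))
  rw [hR] at this
  simpa [ι, ← map_add, ← WithLp.toLp_add] using this.symm

theorem exists_inner_self_eq_isGLB_blockForm (hM : ∀ f g, 0 ≤ blockForm A B C f g) :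
    ∃ S₀ : H₁ →L[ℂ] H₁, ∀ f, ∃ c : ℝ,
      ⟪S₀ f, f⟫_ℂ = c ∧ IsGLB {r : ℝ | ∃ g, r = (blockForm A B C f g).re} c := by
  obtain ⟨T, U, hTU⟩ := exists_blockForm_eq_norm_add_sq A B C hM
  simp only [hTU, Complex.ofReal_re]
  exact exists_inner_self_eq_isGLB_norm_add_sq T U

theorem isGLB_re_inner_self_of_isMax (hM : ∀ f g, 0 ≤ blockForm A B C f g) (S : H₁ →L[ℂ] H₁)
    (hSrem : ∀ f g, 0 ≤ blockForm A B C f g - ⟪S f, f⟫_ℂ)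
    (hSmax : ∀ S' : H₁ →L[ℂ] H₁, (∀ f, 0 ≤ ⟪S' f, f⟫_ℂ) →
      (∀ f g, 0 ≤ blockForm A B C f g - ⟪S' f, f⟫_ℂ) → ∀ f, (⟪S' f, f⟫_ℂ).re ≤ (⟪S f, f⟫_ℂ).re)
    (f : H₁) :
    IsGLB {r : ℝ | ∃ g, r = (blockForm A B C f g).re} (⟪S f, f⟫_ℂ).re := by
  obtain ⟨S₀, hS₀⟩ := exists_inner_self_eq_isGLB_blockForm A B C hM
  have hS₀pos : ∀ f, 0 ≤ ⟪S₀ f, f⟫_ℂ := fun f => by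
    obtain ⟨c, hc, hglb⟩ := hS₀ f
    rw [hc, Complex.zero_le_real]
    exact hglb.2 fun r ⟨g, hr⟩ => hr ▸ (Complex.nonneg_iff.mp (hM f g)).1
  have hS₀rem : ∀ f g, 0 ≤ blockForm A B C f g - ⟪S₀ f, f⟫_ℂ := fun f g => by
    obtain ⟨c, hc, hglb⟩ := hS₀ f
    obtain ⟨-, him⟩ := Complex.nonneg_iff.mp (hM f g)
    rw [hc, Complex.nonneg_iff, Complex.sub_re, Complex.sub_im, Complex.ofReal_re,
      Complex.ofReal_im, sub_nonneg, sub_zero]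
    exact ⟨hglb.1 ⟨g, rfl⟩, him⟩
  obtain ⟨c, hc, hglb⟩ := hS₀ f
  refine ⟨fun r ⟨g, hr⟩ => ?_, fun b hb => ?_⟩
  · have := (Complex.nonneg_iff.mp (hSrem f g)).1
    rw [Complex.sub_re, sub_nonneg] at this
    exact hr ▸ this
  · calc b ≤ c := hglb.2 hb
      _ = (⟪S₀ f, f⟫_ℂ).re := by rw [hc, Complex.ofReal_re]
      _ ≤ (⟪S f, f⟫_ℂ).re := hSmax S₀ hS₀pos hS₀rem f
end

theorem eq_of_re_inner_self_eq {H : Type*} [NormedAddCommGroup H] [InnerProductSpace ℂ H]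
    {S S' : H →L[ℂ] H} (hS : ∀ f, 0 ≤ ⟪S f, f⟫_ℂ) (hS' : ∀ f, 0 ≤ ⟪S' f, f⟫_ℂ)
    (h : ∀ f, (⟪S f, f⟫_ℂ).re = (⟪S' f, f⟫_ℂ).re) : S = S' :=
  coe_injective <| (ext_inner_map _ _).mp fun f => Complex.ext (h f) <| by
    rw [coe_coe, coe_coe, ← (Complex.nonneg_iff.mp (hS f)).2, (Complex.nonneg_iff.mp (hS' f)).2]

theorem stmt_11 {H₁ H₂ : Type*}
    [NormedAddCommGroup H₁] [InnerProductSpace ℂ H₁] [CompleteSpace H₁]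
    [NormedAddCommGroup H₂] [InnerProductSpace ℂ H₂] [CompleteSpace H₂]
    (A : H₁ →L[ℂ] H₁) (B : H₁ →L[ℂ] H₂) (C : H₂ →L[ℂ] H₂)
    (hM : ∀ (f : H₁) (g : H₂),
      0 ≤ ((inner ℂ (A f) f : ℂ) + inner ℂ ((adjoint B) g) f + inner ℂ (B f) g + inner ℂ (C g) g))
    (S : H₁ →L[ℂ] H₁)
    (hSpos : ∀ f, 0 ≤ (inner ℂ (S f) f : ℂ))
    (hSrem : ∀ (f : H₁) (g : H₂),
      0 ≤ ((inner ℂ (A f) f : ℂ) + inner ℂ ((adjoint B) g) f + inner ℂ (B f) g + inner ℂ (C g) g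
            - inner ℂ (S f) f))
    (hSmax : ∀ S' : H₁ →L[ℂ] H₁, (∀ f, 0 ≤ (inner ℂ (S' f) f : ℂ)) →
      (∀ (f : H₁) (g : H₂),
        0 ≤ ((inner ℂ (A f) f : ℂ) + inner ℂ ((adjoint B) g) f + inner ℂ (B f) g + inner ℂ (C g) g
              - inner ℂ (S' f) f)) →
      ∀ f, (inner ℂ (S' f) f : ℂ).re ≤ (inner ℂ (S f) f : ℂ).re) :
    (∀ f : H₁, IsGLB
      {r : ℝ | ∃ g : H₂,
        r = ((inner ℂ (A f) f : ℂ) + inner ℂ ((adjoint B) g) f + inner ℂ (B f) g + inner ℂ (C g) g).re}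
      ((inner ℂ (S f) f : ℂ).re)) ∧
    (∀ S' : H₁ →L[ℂ] H₁, (∀ f, 0 ≤ (inner ℂ (S' f) f : ℂ)) →
      (∀ f : H₁, IsGLB
        {r : ℝ | ∃ g : H₂,
          r = ((inner ℂ (A f) f : ℂ) + inner ℂ ((adjoint B) g) f + inner ℂ (B f) g
                + inner ℂ (C g) g).re}
        ((inner ℂ (S' f) f : ℂ).re)) →
      S' = S) := by
  have hglb := isGLB_re_inner_self_of_isMax A B C hM S hSrem hSmax
  exact ⟨hglb, fun S' hS'pos hS'glb =>
    eq_of_re_inner_self_eq hS'pos hSpos fun f => (hS'glb f).unique (hglb f)⟩
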